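/- With the augmented estimating function Ξ_{ā(1)} defined as in the two-occasion proximal doubly robust construction, if the outcome bridge functions (h1, h0) satisfy their latent-level bridge equations but the functions (q1, q0) used in Ξ are arbitrary measurable functions of (Z̄(1), Ā(1), X̄(1)) and (Z(0), A(0), X(0)) respectively, then still E[Ξ_{ā(1)} | V] = E[Y_{ā(1)} | V]. -/

import Mathlib

open Finset MeasureTheory

open scoped Classical

/-- Probability of an event on a finite outcome space with mass function `p`. -/
noncomputable def pr {Ω : Type*} [Fintype Ω] (p : Ω → ℝ) (E : Ω → Prop) : ℝ :=
  ∑ ω, if E ω then p ω else 0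

/-- Conditional expectation `E[f | E]` on a finite outcome space. -/
noncomputable def cexp {Ω : Type*} [Fintype Ω] (p : Ω → ℝ) (f : Ω → ℝ) (E : Ω → Prop) : ℝ :=
  (∑ ω, if E ω then p ω * f ω else 0) / pr p E

/-- Conditional probability `P(E | F)` on a finite outcome space. -/
noncomputable def cprob {Ω : Type*} [Fintype Ω] (p : Ω → ℝ) (E F : Ω → Prop) : ℝ :=
  pr p (fun ω => E ω ∧ F ω) / pr p F

/-- Expectation on a finite outcome space. -/
noncomputable def pexp {Ω : Type*} [Fintype Ω] (p : Ω → ℝ) (f : Ω → ℝ) : ℝ :=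
  ∑ ω, p ω * f ω

/-- `S` is conditionally independent of `T` given `C`:  for every pair of (bounded) test
functions `F, G` and every value `c` of `C` with positive probability, the conditional
expectation of the product factorizes. -/
def CondIndep {Ω α β γ : Type*} [Fintype Ω] (p : Ω → ℝ)
    (S : Ω → α) (T : Ω → β) (C : Ω → γ) : Prop :=
  ∀ (F : α → ℝ) (G : β → ℝ) (c : γ), pr p (fun ω => C ω = c) ≠ 0 →
    cexp p (fun ω => F (S ω) * G (T ω)) (fun ω => C ω = c) =
      cexp p (fun ω => F (S ω)) (fun ω => C ω = c) *
        cexp p (fun ω => G (T ω)) (fun ω => C ω = c)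


/-! By consistency, `Ξ_ā − Y_ā` is the sum of
`(1{A(1) = a(1)} q1 − q0) · 1{A(0) = a(0)} (Y_ā − h1(W(0), W(1)_{a(0)}))` and
`(1{A(0) = a(0)} q0 − 1) (Y_ā − h0(W(0)))`: in each, a function of treatment proxies and
treatments multiplies an outcome-bridge residual. Given the latent history `(A(0), X̄, Ū)`
(resp. `(X(0), U(0))`) latent randomization factorizes the conditional mean of each product,
and the residual has conditional mean zero: the bridge equation says so on the event that the
next treatment equals `a(t)`, and latent randomization together with positivity allows dropping
that event. Since `V` is a function of `X(0)`, the tower property over the latent history gives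
the result. -/

section ConditionalExpectation

variable {Ω : Type*} [Fintype Ω] (p : Ω → ℝ)

theorem cexp_congr {f g : Ω → ℝ} {E F : Ω → Prop} (hE : ∀ ω, E ω ↔ F ω)
    (hfg : ∀ ω, F ω → f ω = g ω) : cexp p f E = cexp p g F := by
  have hEF : E = F := funext fun ω => propext (hE ω)
  subst hEF
  unfold cexp
  congr 1
  refine Finset.sum_congr rfl fun ω _ => ?_
  split_ifs with h
  · rw [hfg ω h]
  · rfl

theorem cexp_add (f g : Ω → ℝ) (E : Ω → Prop) :
    cexp p (fun ω => f ω + g ω) E = cexp p f E + cexp p g E := by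
  simp only [cexp, ← add_div, ← Finset.sum_add_distrib]
  congr 1
  exact Finset.sum_congr rfl fun ω _ => by split_ifs <;> ring

theorem cexp_sub (f g : Ω → ℝ) (E : Ω → Prop) :
    cexp p (fun ω => f ω - g ω) E = cexp p f E - cexp p g E := by
  simp only [cexp, ← sub_div, ← Finset.sum_sub_distrib]
  congr 1
  exact Finset.sum_congr rfl fun ω _ => by split_ifs <;> ring

theorem cexp_zero (E : Ω → Prop) : cexp p (fun _ => 0) E = 0 := by
  simp [cexp]

theorem cexp_indicator (D E : Ω → Prop) :
    cexp p (fun ω => if D ω then 1 else 0) E = cprob p D E := by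
  unfold cexp cprob pr
  congr 1
  exact Finset.sum_congr rfl fun ω _ => by by_cases D ω <;> by_cases E ω <;> simp [*]

theorem cexp_indicator_mul (f : Ω → ℝ) {D E : Ω → Prop}
    (hDE : pr p (fun ω => D ω ∧ E ω) ≠ 0) :
    cexp p (fun ω => (if D ω then 1 else 0) * f ω) E =
      cprob p D E * cexp p f (fun ω => D ω ∧ E ω) := by
  have hsum : (∑ ω, if E ω then p ω * ((if D ω then 1 else 0) * f ω) else 0) =
      ∑ ω, if D ω ∧ E ω then p ω * f ω else 0 :=
    Finset.sum_congr rfl fun ω _ => by by_cases D ω <;> by_cases E ω <;> simp [*]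
  rw [cexp, hsum, cprob, cexp]
  field_simp

theorem pr_and_ne_zero_of_cprob_pos {D E : Ω → Prop} (h : 0 < cprob p D E) :
    pr p (fun ω => D ω ∧ E ω) ≠ 0 := by
  intro h0
  simp [cprob, h0] at h

variable {p}

theorem eq_zero_of_pr_eq_zero (hp : ∀ ω, 0 ≤ p ω) {E : Ω → Prop} (hE : pr p E = 0)
    {ω : Ω} (hω : E ω) : p ω = 0 := by
  have := (Finset.sum_eq_zero_iff_of_nonneg fun ω _ => ?_).mp hE ω (Finset.mem_univ ω)
  · simpa [hω] using this
  · split_ifs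
    exacts [hp ω, le_rfl]

theorem cexp_comp_eq_zero_of_fiberwise {γ : Type*} (hp : ∀ ω, 0 ≤ p ω) (f : Ω → ℝ)
    (g : Ω → γ) (hfib : ∀ c, pr p (fun ω => g ω = c) ≠ 0 → cexp p f (fun ω => g ω = c) = 0)
    (E : γ → Prop) : cexp p f (fun ω => E (g ω)) = 0 := by
  have hfiber_sum : ∀ c, (∑ ω, if g ω = c then p ω * f ω else 0) = 0 := by
    intro c
    by_cases hc : pr p (fun ω => g ω = c) = 0
    · refine Finset.sum_eq_zero fun ω _ => ?_
      split_ifs with h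
      · rw [eq_zero_of_pr_eq_zero hp hc h, zero_mul]
      · rfl
    · have := hfib c hc
      rwa [cexp, div_eq_zero_iff, or_iff_left hc] at this
  have hsplit : ∀ ω, (if E (g ω) then p ω * f ω else 0) =
      ∑ c ∈ Finset.univ.image g, if g ω = c then (if E c then p ω * f ω else 0) else 0 := fun ω => by
    rw [Finset.sum_ite_eq, if_pos (Finset.mem_image_of_mem g (Finset.mem_univ ω))]
  rw [cexp, div_eq_zero_iff, Finset.sum_congr rfl fun ω _ => hsplit ω, Finset.sum_comm]
  refine Or.inl (Finset.sum_eq_zero fun c _ => ?_)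
  by_cases hE : E c <;> simp [hE, hfiber_sum]

end ConditionalExpectation

namespace CondIndep

variable {Ω α β γ : Type*} [Fintype Ω] {p : Ω → ℝ} {S : Ω → α} {T : Ω → β} {C : Ω → γ}

theorem cexp_eq_zero_of_restrict (h : CondIndep p S T C) {c : γ}
    (hc : pr p (fun ω => C ω = c) ≠ 0) {D : α → Prop} {G : β → ℝ}
    (hD : 0 < cprob p (fun ω => D (S ω)) (fun ω => C ω = c))
    (hG : cexp p (fun ω => G (T ω)) (fun ω => D (S ω) ∧ C ω = c) = 0) :
    cexp p (fun ω => G (T ω)) (fun ω => C ω = c) = 0 := by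
  have hfac := h (fun s => if D s then 1 else 0) G c hc
  rw [cexp_indicator_mul p _ (pr_and_ne_zero_of_cprob_pos p hD), hG, mul_zero,
    cexp_indicator] at hfac
  exact (mul_eq_zero.mp hfac.symm).resolve_left hD.ne'

theorem cexp_mul_eq_zero (h : CondIndep p S T C) (hp : ∀ ω, 0 ≤ p ω) (F : γ → α → ℝ)
    (G : γ → β → ℝ)
    (hG : ∀ c, pr p (fun ω => C ω = c) ≠ 0 → cexp p (fun ω => G c (T ω)) (fun ω => C ω = c) = 0)
    (E : γ → Prop) :
    cexp p (fun ω => F (C ω) (S ω) * G (C ω) (T ω)) (fun ω => E (C ω)) = 0 := by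
  refine cexp_comp_eq_zero_of_fiberwise hp _ C (fun c hc => ?_) E
  rw [cexp_congr p (fun ω => Iff.rfl) (g := fun ω => F c (S ω) * G c (T ω))
    (fun ω hω => by rw [hω]), h (F c) (G c) c hc, hG c hc, mul_zero]

end CondIndep

section OutcomeBridge

variable {Ω 𝒳0 𝒳1 𝒵0 𝒵1 𝒲0 𝒲1 𝒰0 𝒰1 : Type*} [Fintype Ω] {p : Ω → ℝ}
  {A0 A1 : Ω → Bool} {X0 : Ω → 𝒳0} {X1 : Ω → 𝒳1} {Z0 : Ω → 𝒵0} {Z1 : Ω → 𝒵1}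
  {W0 : Ω → 𝒲0} {W1 : Ω → 𝒲1} {U0 : Ω → 𝒰0} {U1 : Ω → 𝒰1} {Y : Ω → ℝ}

theorem cexp_outcomeBridge1_residual_eq_zero {Y' : Ω → ℝ} {W1' : Ω → 𝒲1} {b0 b1 : Bool}
    {h1 : 𝒲0 × 𝒲1 → 𝒳0 × 𝒳1 → ℝ}
    (hconsY : ∀ ω, A0 ω = b0 → A1 ω = b1 → Y ω = Y' ω)
    (hconsW : ∀ ω, A0 ω = b0 → W1 ω = W1' ω)
    (hpos : ∀ u0 u1 x0 x1,
      pr p (fun ω => A0 ω = b0 ∧ U0 ω = u0 ∧ U1 ω = u1 ∧ X0 ω = x0 ∧ X1 ω = x1) ≠ 0 →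
      0 < cprob p (fun ω => A1 ω = b1)
        (fun ω => A0 ω = b0 ∧ U0 ω = u0 ∧ U1 ω = u1 ∧ X0 ω = x0 ∧ X1 ω = x1))
    (hLR : CondIndep p (fun ω => (Z0 ω, Z1 ω, A1 ω)) (fun ω => (W0 ω, W1' ω, Y' ω))
      (fun ω => (A0 ω, X0 ω, X1 ω, U0 ω, U1 ω)))
    (hbridge : ∀ u0 u1 x0 x1,
      pr p (fun ω => A0 ω = b0 ∧ A1 ω = b1 ∧ U0 ω = u0 ∧ U1 ω = u1 ∧
        X0 ω = x0 ∧ X1 ω = x1) ≠ 0 →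
      cexp p (fun ω => h1 (W0 ω, W1 ω) (X0 ω, X1 ω))
          (fun ω => A0 ω = b0 ∧ A1 ω = b1 ∧ U0 ω = u0 ∧ U1 ω = u1 ∧
            X0 ω = x0 ∧ X1 ω = x1) =
        cexp p Y (fun ω => A0 ω = b0 ∧ A1 ω = b1 ∧ U0 ω = u0 ∧ U1 ω = u1 ∧
          X0 ω = x0 ∧ X1 ω = x1))
    (x0 : 𝒳0) (x1 : 𝒳1) (u0 : 𝒰0) (u1 : 𝒰1)
    (hl : pr p (fun ω => (A0 ω, X0 ω, X1 ω, U0 ω, U1 ω) = (b0, x0, x1, u0, u1)) ≠ 0) :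
    cexp p (fun ω => Y' ω - h1 (W0 ω, W1' ω) (x0, x1))
      (fun ω => (A0 ω, X0 ω, X1 ω, U0 ω, U1 ω) = (b0, x0, x1, u0, u1)) = 0 := by
  have hL : (fun ω => (A0 ω, X0 ω, X1 ω, U0 ω, U1 ω) = (b0, x0, x1, u0, u1)) =
      fun ω => A0 ω = b0 ∧ U0 ω = u0 ∧ U1 ω = u1 ∧ X0 ω = x0 ∧ X1 ω = x1 := by
    ext ω; simp only [Prod.mk.injEq]; tauto
  have hD := hpos u0 u1 x0 x1 (hL ▸ hl)
  refine hLR.cexp_eq_zero_of_restrict (D := fun s => s.2.2 = b1)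
    (G := fun t => t.2.2 - h1 (t.1, t.2.1) (x0, x1)) hl (hL ▸ hD) ?_
  have hB : pr p (fun ω => A0 ω = b0 ∧ A1 ω = b1 ∧ U0 ω = u0 ∧ U1 ω = u1 ∧
      X0 ω = x0 ∧ X1 ω = x1) ≠ 0 := by
    convert pr_and_ne_zero_of_cprob_pos p hD using 2
    ext ω
    tauto
  calc _ = cexp p (fun ω => Y ω - h1 (W0 ω, W1 ω) (X0 ω, X1 ω))
        (fun ω => A0 ω = b0 ∧ A1 ω = b1 ∧ U0 ω = u0 ∧ U1 ω = u1 ∧ X0 ω = x0 ∧ X1 ω = x1) := by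
        refine cexp_congr p (fun ω => by simp only [Prod.mk.injEq]; tauto) fun ω hω => ?_
        obtain ⟨ha0, ha1, -, -, hx0, hx1⟩ := hω
        rw [hconsY ω ha0 ha1, hconsW ω ha0, hx0, hx1]
    _ = 0 := by rw [cexp_sub, hbridge u0 u1 x0 x1 hB, sub_self]

theorem cexp_outcomeBridge0_residual_eq_zero {Y' : Ω → ℝ} {b0 : Bool} {h0 : 𝒲0 → 𝒳0 → ℝ}
    (hpos : ∀ u0 x0, pr p (fun ω => U0 ω = u0 ∧ X0 ω = x0) ≠ 0 →
      0 < cprob p (fun ω => A0 ω = b0) (fun ω => U0 ω = u0 ∧ X0 ω = x0))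
    (hLR : CondIndep p (fun ω => (Z0 ω, A0 ω)) (fun ω => (W0 ω, Y' ω)) (fun ω => (X0 ω, U0 ω)))
    (hbridge : ∀ u0 x0, pr p (fun ω => A0 ω = b0 ∧ U0 ω = u0 ∧ X0 ω = x0) ≠ 0 →
      cexp p Y' (fun ω => A0 ω = b0 ∧ U0 ω = u0 ∧ X0 ω = x0) =
        cexp p (fun ω => h0 (W0 ω) (X0 ω)) (fun ω => A0 ω = b0 ∧ U0 ω = u0 ∧ X0 ω = x0))
    (x0 : 𝒳0) (u0 : 𝒰0) (hl : pr p (fun ω => (X0 ω, U0 ω) = (x0, u0)) ≠ 0) :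
    cexp p (fun ω => Y' ω - h0 (W0 ω) x0) (fun ω => (X0 ω, U0 ω) = (x0, u0)) = 0 := by
  have hL : (fun ω => (X0 ω, U0 ω) = (x0, u0)) = fun ω => U0 ω = u0 ∧ X0 ω = x0 := by
    ext ω; simp only [Prod.mk.injEq]; tauto
  have hD := hpos u0 x0 (hL ▸ hl)
  refine hLR.cexp_eq_zero_of_restrict (D := fun s => s.2 = b0)
    (G := fun t => t.2 - h0 t.1 x0) hl (hL ▸ hD) ?_
  have hB : pr p (fun ω => A0 ω = b0 ∧ U0 ω = u0 ∧ X0 ω = x0) ≠ 0 :=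
    pr_and_ne_zero_of_cprob_pos p hD
  calc _ = cexp p (fun ω => Y' ω - h0 (W0 ω) (X0 ω))
        (fun ω => A0 ω = b0 ∧ U0 ω = u0 ∧ X0 ω = x0) := by
        refine cexp_congr p (fun ω => by simp only [Prod.mk.injEq]; tauto) fun ω hω => ?_
        rw [hω.2.2]
    _ = 0 := by rw [cexp_sub, hbridge u0 x0 hB, sub_self]

end OutcomeBridge

theorem stmt_13_general {Ω 𝒳0 𝒳1 𝒵0 𝒵1 𝒲0 𝒲1 𝒰0 𝒰1 𝒱 : Type*} [Fintype Ω]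
    (p : Ω → ℝ) (hp : ∀ ω, 0 ≤ p ω)
    (A0 A1 : Ω → Bool) (X0 : Ω → 𝒳0) (X1 : Ω → 𝒳1)
    (Z0 : Ω → 𝒵0) (Z1 : Ω → 𝒵1) (W0 : Ω → 𝒲0) (W1 : Ω → 𝒲1)
    (U0 : Ω → 𝒰0) (U1 : Ω → 𝒰1)
    (Y : Ω → ℝ) (Y' : Bool → Bool → Ω → ℝ) (W1' : Bool → Ω → 𝒲1)
    (h1 : 𝒲0 × 𝒲1 → Bool × Bool → 𝒳0 × 𝒳1 → ℝ)
    (h0 : 𝒲0 → Bool × Bool → 𝒳0 → ℝ)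
    -- arbitrary measurable functions in place of the treatment bridges
    (q0 : 𝒵0 → Bool → 𝒳0 → ℝ)
    (q1 : 𝒵0 × 𝒵1 → Bool × Bool → 𝒳0 × 𝒳1 → ℝ)
    (v : 𝒳0 → 𝒱)
    -- consistency and positivity
    (hconsY : ∀ ω, Y ω = Y' (A0 ω) (A1 ω) ω)
    (hconsW : ∀ ω, W1 ω = W1' (A0 ω) ω)
    (hpos0 : ∀ (a : Bool) u0 x0, pr p (fun ω => U0 ω = u0 ∧ X0 ω = x0) ≠ 0 →
      0 < cprob p (fun ω => A0 ω = a) (fun ω => U0 ω = u0 ∧ X0 ω = x0))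
    (hpos1 : ∀ (a a' : Bool) u0 u1 x0 x1,
      pr p (fun ω => A0 ω = a' ∧ U0 ω = u0 ∧ U1 ω = u1 ∧ X0 ω = x0 ∧ X1 ω = x1) ≠ 0 →
      0 < cprob p (fun ω => A1 ω = a)
        (fun ω => A0 ω = a' ∧ U0 ω = u0 ∧ U1 ω = u1 ∧ X0 ω = x0 ∧ X1 ω = x1))
    -- sequential proximal latent randomization
    (hLR1 : ∀ b0 b1 : Bool, CondIndep p (fun ω => (Z0 ω, Z1 ω, A1 ω))
      (fun ω => (W0 ω, W1' b0 ω, Y' b0 b1 ω))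
      (fun ω => (A0 ω, X0 ω, X1 ω, U0 ω, U1 ω)))
    (hLR0 : ∀ b0 b1 : Bool, CondIndep p (fun ω => (Z0 ω, A0 ω))
      (fun ω => (W0 ω, Y' b0 b1 ω)) (fun ω => (X0 ω, U0 ω)))
    -- latent-level outcome bridge equations for (h1, h0)
    (hbridgeh1 : ∀ (b0 b1 : Bool) u0 u1 x0 x1,
      pr p (fun ω => A0 ω = b0 ∧ A1 ω = b1 ∧ U0 ω = u0 ∧ U1 ω = u1 ∧
        X0 ω = x0 ∧ X1 ω = x1) ≠ 0 →
      cexp p (fun ω => h1 (W0 ω, W1 ω) (b0, b1) (X0 ω, X1 ω))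
          (fun ω => A0 ω = b0 ∧ A1 ω = b1 ∧ U0 ω = u0 ∧ U1 ω = u1 ∧
            X0 ω = x0 ∧ X1 ω = x1) =
        cexp p Y (fun ω => A0 ω = b0 ∧ A1 ω = b1 ∧ U0 ω = u0 ∧ U1 ω = u1 ∧
          X0 ω = x0 ∧ X1 ω = x1))
    (hbridgeh0 : ∀ (b0 b1 : Bool) u0 x0,
      pr p (fun ω => A0 ω = b0 ∧ U0 ω = u0 ∧ X0 ω = x0) ≠ 0 →
      cexp p (Y' b0 b1) (fun ω => A0 ω = b0 ∧ U0 ω = u0 ∧ X0 ω = x0) =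
        cexp p (fun ω => h0 (W0 ω) (b0, b1) (X0 ω))
          (fun ω => A0 ω = b0 ∧ U0 ω = u0 ∧ X0 ω = x0))
    -- the augmented (doubly-robust) estimating function Ξ
    (Xi : Bool × Bool → Ω → ℝ)
    (hXi : ∀ (b0 b1 : Bool) ω, Xi (b0, b1) ω =
      (if A0 ω = b0 ∧ A1 ω = b1 then (1 : ℝ) else 0) *
          q1 (Z0 ω, Z1 ω) (b0, b1) (X0 ω, X1 ω) *
          (Y ω - h1 (W0 ω, W1 ω) (b0, b1) (X0 ω, X1 ω)) +
        (if A0 ω = b0 then (1 : ℝ) else 0) * q0 (Z0 ω) b0 (X0 ω) *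
          (h1 (W0 ω, W1 ω) (b0, b1) (X0 ω, X1 ω) - h0 (W0 ω) (b0, b1) (X0 ω)) +
        h0 (W0 ω) (b0, b1) (X0 ω)) :
    ∀ (b0 b1 : Bool) (c : 𝒱), pr p (fun ω => v (X0 ω) = c) ≠ 0 →
      cexp p (Xi (b0, b1)) (fun ω => v (X0 ω) = c) =
        cexp p (Y' b0 b1) (fun ω => v (X0 ω) = c) := by
  intro b0 b1 c hc
  have hG1 : ∀ l : Bool × 𝒳0 × 𝒳1 × 𝒰0 × 𝒰1,
      pr p (fun ω => (A0 ω, X0 ω, X1 ω, U0 ω, U1 ω) = l) ≠ 0 →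
      cexp p (fun ω => if l.1 = b0 then
          Y' b0 b1 ω - h1 (W0 ω, W1' b0 ω) (b0, b1) (l.2.1, l.2.2.1) else 0)
        (fun ω => (A0 ω, X0 ω, X1 ω, U0 ω, U1 ω) = l) = 0 := by
    rintro ⟨a0, x0, x1, u0, u1⟩ hl
    by_cases ha : a0 = b0
    · subst ha
      simpa using cexp_outcomeBridge1_residual_eq_zero (h1 := fun w x => h1 w (a0, b1) x)
        (fun ω ha0 ha1 => by rw [hconsY ω, ha0, ha1]) (fun ω ha0 => by rw [hconsW ω, ha0])
        (hpos1 b1 a0) (hLR1 a0 b1) (hbridgeh1 a0 b1) x0 x1 u0 u1 hl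
    · simpa [ha] using cexp_zero p _
  have hG0 : ∀ l : 𝒳0 × 𝒰0, pr p (fun ω => (X0 ω, U0 ω) = l) ≠ 0 →
      cexp p (fun ω => Y' b0 b1 ω - h0 (W0 ω) (b0, b1) l.1)
        (fun ω => (X0 ω, U0 ω) = l) = 0 := fun ⟨x0, u0⟩ hl =>
    cexp_outcomeBridge0_residual_eq_zero (h0 := fun w x => h0 w (b0, b1) x)
      (hpos0 b0) (hLR0 b0 b1) (hbridgeh0 b0 b1) x0 u0 hl
  have hR1 := (hLR1 b0 b1).cexp_mul_eq_zero hp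
    (fun l s => (if s.2.2 = b1 then q1 (s.1, s.2.1) (b0, b1) (l.2.1, l.2.2.1) else 0) -
      q0 s.1 b0 l.2.1)
    (fun l t => if l.1 = b0 then t.2.2 - h1 (t.1, t.2.1) (b0, b1) (l.2.1, l.2.2.1) else 0)
    hG1 (fun l => v l.2.1 = c)
  have hR0 := (hLR0 b0 b1).cexp_mul_eq_zero hp
    (fun l s => (if s.2 = b0 then q0 s.1 b0 l.1 else 0) - 1)
    (fun l t => t.2 - h0 t.1 (b0, b1) l.1) hG0 (fun l => v l.1 = c)
  beta_reduce at hR1 hR0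
  have hdecomp : Xi (b0, b1) = fun ω => Y' b0 b1 ω +
      ((if A1 ω = b1 then q1 (Z0 ω, Z1 ω) (b0, b1) (X0 ω, X1 ω) else 0) - q0 (Z0 ω) b0 (X0 ω)) *
        (if A0 ω = b0 then Y' b0 b1 ω - h1 (W0 ω, W1' b0 ω) (b0, b1) (X0 ω, X1 ω) else 0) +
      ((if A0 ω = b0 then q0 (Z0 ω) b0 (X0 ω) else 0) - 1) *
        (Y' b0 b1 ω - h0 (W0 ω) (b0, b1) (X0 ω)) := by
    ext ω
    rw [hXi, hconsY ω, hconsW ω]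
    by_cases ha0 : A0 ω = b0 <;> by_cases ha1 : A1 ω = b1 <;> simp [ha0, ha1] <;> ring
  rw [hdecomp, cexp_add, cexp_add, hR1, hR0, add_zero, add_zero]

/-- double robustness, outcome-bridge side: if `(h1, h0)` satisfy their
latent-level outcome bridge equations, then the augmented estimating function `Ξ` built
with *arbitrary* functions `(q1, q0)` of the treatment-inducing proxies still satisfies
`E[Ξ_{ā(1)} | V] = E[Y_{ā(1)} | V]`. -/
theorem stmt_13 {Ω 𝒳0 𝒳1 𝒵0 𝒵1 𝒲0 𝒲1 𝒰0 𝒰1 𝒱 : Type*} [Fintype Ω]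
    (p : Ω → ℝ) (hp : ∀ ω, 0 ≤ p ω) (hsum : ∑ ω, p ω = 1)
    (A0 A1 : Ω → Bool) (X0 : Ω → 𝒳0) (X1 : Ω → 𝒳1)
    (Z0 : Ω → 𝒵0) (Z1 : Ω → 𝒵1) (W0 : Ω → 𝒲0) (W1 : Ω → 𝒲1)
    (U0 : Ω → 𝒰0) (U1 : Ω → 𝒰1)
    (Y : Ω → ℝ) (Y' : Bool → Bool → Ω → ℝ) (W1' : Bool → Ω → 𝒲1)
    (h1 : 𝒲0 × 𝒲1 → Bool × Bool → 𝒳0 × 𝒳1 → ℝ)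
    (h0 : 𝒲0 → Bool × Bool → 𝒳0 → ℝ)
    -- arbitrary measurable functions in place of the treatment bridges
    (q0 : 𝒵0 → Bool → 𝒳0 → ℝ)
    (q1 : 𝒵0 × 𝒵1 → Bool × Bool → 𝒳0 × 𝒳1 → ℝ)
    (v : 𝒳0 → 𝒱)
    -- consistency and positivity
    (hconsY : ∀ ω, Y ω = Y' (A0 ω) (A1 ω) ω)
    (hconsW : ∀ ω, W1 ω = W1' (A0 ω) ω)
    (hpos0 : ∀ (a : Bool) u0 x0, pr p (fun ω => U0 ω = u0 ∧ X0 ω = x0) ≠ 0 →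
      0 < cprob p (fun ω => A0 ω = a) (fun ω => U0 ω = u0 ∧ X0 ω = x0))
    (hpos1 : ∀ (a a' : Bool) u0 u1 x0 x1,
      pr p (fun ω => A0 ω = a' ∧ U0 ω = u0 ∧ U1 ω = u1 ∧ X0 ω = x0 ∧ X1 ω = x1) ≠ 0 →
      0 < cprob p (fun ω => A1 ω = a)
        (fun ω => A0 ω = a' ∧ U0 ω = u0 ∧ U1 ω = u1 ∧ X0 ω = x0 ∧ X1 ω = x1))
    -- sequential proximal latent randomization
    (hLR1 : ∀ b0 b1 : Bool, CondIndep p (fun ω => (Z0 ω, Z1 ω, A1 ω))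
      (fun ω => (W0 ω, W1' b0 ω, Y' b0 b1 ω))
      (fun ω => (A0 ω, X0 ω, X1 ω, U0 ω, U1 ω)))
    (hLR0 : ∀ b0 b1 : Bool, CondIndep p (fun ω => (Z0 ω, A0 ω))
      (fun ω => (W0 ω, Y' b0 b1 ω)) (fun ω => (X0 ω, U0 ω)))
    -- latent-level outcome bridge equations for (h1, h0)
    (hbridgeh1 : ∀ (b0 b1 : Bool) u0 u1 x0 x1,
      pr p (fun ω => A0 ω = b0 ∧ A1 ω = b1 ∧ U0 ω = u0 ∧ U1 ω = u1 ∧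
        X0 ω = x0 ∧ X1 ω = x1) ≠ 0 →
      cexp p (fun ω => h1 (W0 ω, W1 ω) (b0, b1) (X0 ω, X1 ω))
          (fun ω => A0 ω = b0 ∧ A1 ω = b1 ∧ U0 ω = u0 ∧ U1 ω = u1 ∧
            X0 ω = x0 ∧ X1 ω = x1) =
        cexp p Y (fun ω => A0 ω = b0 ∧ A1 ω = b1 ∧ U0 ω = u0 ∧ U1 ω = u1 ∧
          X0 ω = x0 ∧ X1 ω = x1))
    (hbridgeh0 : ∀ (b0 b1 : Bool) u0 x0,
      pr p (fun ω => A0 ω = b0 ∧ U0 ω = u0 ∧ X0 ω = x0) ≠ 0 →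
      cexp p (Y' b0 b1) (fun ω => A0 ω = b0 ∧ U0 ω = u0 ∧ X0 ω = x0) =
        cexp p (fun ω => h0 (W0 ω) (b0, b1) (X0 ω))
          (fun ω => A0 ω = b0 ∧ U0 ω = u0 ∧ X0 ω = x0))
    -- the augmented (doubly-robust) estimating function Ξ
    (Xi : Bool × Bool → Ω → ℝ)
    (hXi : ∀ (b0 b1 : Bool) ω, Xi (b0, b1) ω =
      (if A0 ω = b0 ∧ A1 ω = b1 then (1 : ℝ) else 0) *
          q1 (Z0 ω, Z1 ω) (b0, b1) (X0 ω, X1 ω) *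
          (Y ω - h1 (W0 ω, W1 ω) (b0, b1) (X0 ω, X1 ω)) +
        (if A0 ω = b0 then (1 : ℝ) else 0) * q0 (Z0 ω) b0 (X0 ω) *
          (h1 (W0 ω, W1 ω) (b0, b1) (X0 ω, X1 ω) - h0 (W0 ω) (b0, b1) (X0 ω)) +
        h0 (W0 ω) (b0, b1) (X0 ω)) :
    ∀ (b0 b1 : Bool) (c : 𝒱), pr p (fun ω => v (X0 ω) = c) ≠ 0 →
      cexp p (Xi (b0, b1)) (fun ω => v (X0 ω) = c) =
        cexp p (Y' b0 b1) (fun ω => v (X0 ω) = c) :=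
  stmt_13_general p hp A0 A1 X0 X1 Z0 Z1 W0 W1 U0 U1 Y Y' W1' h1 h0 q0 q1 v hconsY hconsW hpos0
    hpos1 hLR1 hLR0 hbridgeh1 hbridgeh0 Xi hXi
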